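/- arXiv:2310.03530 — 3 statements merged into one kernel-verified Lean document; each statement's English description precedes it below -/
import Mathlib

section
/- Let G be a group acting on measure spaces X and Ξ with invariant measures, let π and π̂ denote the left-regular representations of G on L²(X) and L²(Ξ) respectively (πg[f](x) = f(g⁻¹·x), π̂g[γ](ξ) = γ(g⁻¹·ξ)), and let ψ be a joint G-invariant function on X × Ξ. Then the ridgelet transform R_ψ[f](ξ) := ∫_X f(x) conj(ψ(x,ξ)) dx intertwines π and π̂: R_ψ ∘ πg = π̂g ∘ R_ψ for all g ∈ G. -/
open MeasureTheory

/- Substitute `x = g • y`, which the invariance of `μ` allows; the joint invariance of `ψ` then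
moves `g` from the first argument of `ψ` to `g⁻¹` in the second. -/

theorem integral_comp_smul_of_measurePreserving {G X E : Type*} [Group G] [MulAction G X]
    [MeasurableSpace X] [NormedAddCommGroup E] [NormedSpace ℝ E] {μ : Measure X}
    (hμ : ∀ g : G, MeasurePreserving (fun x : X => g • x) μ μ) (F : X → E) (g : G) :
    ∫ x, F (g • x) ∂μ = ∫ x, F x ∂μ := by
  have : MeasurableConstSMul G X := ⟨fun g => (hμ g).measurable⟩
  have : SMulInvariantMeasure G X μ :=
    ⟨fun g _ hs => (hμ g).measure_preimage hs.nullMeasurableSet⟩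
  exact integral_smul_eq_self F

theorem ridgelet_intertwines_general {G X Ξ : Type*} [Group G] [MulAction G X] [MulAction G Ξ]
    [MeasurableSpace X] (μ : Measure X)
    (hμ : ∀ g : G, MeasurePreserving (fun x : X => g • x) μ μ)
    (ψ : X → Ξ → ℂ)
    (hψ : ∀ (g : G) (x : X) (ξ : Ξ), ψ (g • x) (g • ξ) = ψ x ξ)
    (f : X → ℂ)
    (g : G) (ξ : Ξ) :
    ∫ x, f (g⁻¹ • x) * (starRingEnd ℂ) (ψ x ξ) ∂μ
      = ∫ x, f x * (starRingEnd ℂ) (ψ x (g⁻¹ • ξ)) ∂μ := by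
  calc ∫ x, f (g⁻¹ • x) * (starRingEnd ℂ) (ψ x ξ) ∂μ
      = ∫ x, f (g⁻¹ • g • x) * (starRingEnd ℂ) (ψ (g • x) ξ) ∂μ :=
        (integral_comp_smul_of_measurePreserving hμ _ g).symm
    _ = ∫ x, f x * (starRingEnd ℂ) (ψ x (g⁻¹ • ξ)) ∂μ := by
        congr 1 with x
        rw [inv_smul_smul, ← hψ g x (g⁻¹ • ξ), smul_inv_smul]

/-- The ridgelet transform `R_ψ[f](ξ) = ∫_X f(x) conj(ψ(x,ξ)) dx` induced by a joint
    `G`-invariant function `ψ` intertwines the regular representations: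
    `R_ψ[π_g f] = π̂_g [R_ψ f]`, i.e. `R_ψ[f(g⁻¹·)] (ξ) = R_ψ[f] (g⁻¹·ξ)`. -/
theorem ridgelet_intertwines {G X Ξ : Type*} [Group G] [MulAction G X] [MulAction G Ξ]
    [MeasurableSpace X] (μ : Measure X)
    (hμ : ∀ g : G, MeasurePreserving (fun x : X => g • x) μ μ)
    (ψ : X → Ξ → ℂ)
    (hψ : ∀ (g : G) (x : X) (ξ : Ξ), ψ (g • x) (g • ξ) = ψ x ξ)
    (f : X → ℂ)
    (hf : ∀ ξ : Ξ, Integrable (fun x => f x * (starRingEnd ℂ) (ψ x ξ)) μ)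
    (g : G) (ξ : Ξ) :
    ∫ x, f (g⁻¹ • x) * (starRingEnd ℂ) (ψ x ξ) ∂μ
      = ∫ x, f x * (starRingEnd ℂ) (ψ x (g⁻¹ • ξ)) ∂μ :=
  ridgelet_intertwines_general μ hμ ψ hψ f g ξ
end

section
/- Let σ ∈ L²(ℝ) (or a measurable function with appropriate integrability) and define the regular representation of Aff(m) on L²(ℝᵐ) by π(g)[f](x) = |det L|^{-1/2} f(L⁻¹(x−t)) for g = (L,t), and on L²(ℝᵐ×ℝ) by π̂(g)[γ](a,b) = |det L|^{1/2} γ(Lᵀa, b − a·t). Then the ridgelet transform R_ρ[f](a,b) = ∫ f(x) conj(ρ(a·x − b)) dx satisfies R_ρ ∘ π(g) = π̂(g) ∘ R_ρ for all g ∈ Aff(m), for all f for which the integrals converge. -/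
open Matrix MeasureTheory

/-! Substituting `x = L y + t` turns `a ⬝ᵥ x - b` into `(Lᵀ a) ⬝ᵥ y - (b - a ⬝ᵥ t)` and `dx` into
`|det L| dy`; the normalisations then combine as `|det L|^{-1/2} * |det L| = |det L|^{1/2}`. -/

section ChangeOfVariables

variable {E F : Type*} [NormedAddCommGroup E] [NormedSpace ℝ E] [MeasurableSpace E] [BorelSpace E]
  [FiniteDimensional ℝ E] [NormedAddCommGroup F] [NormedSpace ℝ F]
  (μ : Measure E) [μ.IsAddHaarMeasure]

theorem integral_comp_linearMap_of_det_ne_zero {A : E →ₗ[ℝ] E} (hA : LinearMap.det A ≠ 0)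
    (g : E → F) : ∫ x, g (A x) ∂μ = |(LinearMap.det A)⁻¹| • ∫ y, g y ∂μ := by
  let e := (A.equivOfDetNeZero hA).toContinuousLinearEquiv.toHomeomorph.toMeasurableEquiv
  calc ∫ x, g (A x) ∂μ = ∫ y, g y ∂(μ.map e) := (integral_map_equiv e g).symm
    _ = _ := by
      rw [show (e : E → E) = A from rfl, μ.map_linearMap_addHaar_eq_smul_addHaar hA,
        integral_smul_measure, ENNReal.toReal_ofReal (abs_nonneg _)]

theorem integral_comp_linearMap_comp_sub {A : E →ₗ[ℝ] E} (hA : LinearMap.det A ≠ 0)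
    (g : E → F) (t : E) : ∫ x, g (A (x - t)) ∂μ = |(LinearMap.det A)⁻¹| • ∫ y, g y ∂μ := by
  rw [integral_sub_right_eq_self (fun x ↦ g (A x)) t,
    integral_comp_linearMap_of_det_ne_zero μ hA]

end ChangeOfVariables

theorem transpose_mulVec_dotProduct_mulVec {n R : Type*} [Fintype n] [DecidableEq n] [CommRing R]
    {M N : Matrix n n R} (h : M * N = 1) (a v : n → R) :
    (Mᵀ *ᵥ a) ⬝ᵥ (N *ᵥ v) = a ⬝ᵥ v := by
  rw [dotProduct_mulVec, mulVec_transpose, vecMul_vecMul, h, vecMul_one]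

theorem ridgelet_intertwines_affine_general {m : ℕ} (ρ : ℝ → ℂ) (f : (Fin m → ℝ) → ℂ)
    (L : GL (Fin m) ℝ) (t : Fin m → ℝ)
    (a : Fin m → ℝ) (b : ℝ) :
    ∫ x : Fin m → ℝ,
        ((Real.sqrt |(L : Matrix (Fin m) (Fin m) ℝ).det| : ℂ))⁻¹ *
          f (((L⁻¹ : GL (Fin m) ℝ) : Matrix (Fin m) (Fin m) ℝ) *ᵥ (x - t)) *
          (starRingEnd ℂ) (ρ (a ⬝ᵥ x - b))
      = (Real.sqrt |(L : Matrix (Fin m) (Fin m) ℝ).det| : ℂ) *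
          ∫ x : Fin m → ℝ,
            f x * (starRingEnd ℂ)
              (ρ (((L : Matrix (Fin m) (Fin m) ℝ)ᵀ *ᵥ a) ⬝ᵥ x - (b - a ⬝ᵥ t))) := by
  set c : ℝ := Real.sqrt |(L : Matrix (Fin m) (Fin m) ℝ).det|
  set g : (Fin m → ℝ) → ℂ := fun y ↦
    f y * (starRingEnd ℂ) (ρ (((L : Matrix (Fin m) (Fin m) ℝ)ᵀ *ᵥ a) ⬝ᵥ y - (b - a ⬝ᵥ t)))
  have hg : ∀ x, f (((L⁻¹ : GL (Fin m) ℝ) : Matrix (Fin m) (Fin m) ℝ) *ᵥ (x - t)) *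
      (starRingEnd ℂ) (ρ (a ⬝ᵥ x - b)) = g (toLin' (L⁻¹ : GL (Fin m) ℝ).val (x - t)) := by
    intro x
    simp only [g, toLin'_apply, transpose_mulVec_dotProduct_mulVec L.mul_inv, dotProduct_sub]
    ring_nf
  have hdet : LinearMap.det (toLin' (L⁻¹ : GL (Fin m) ℝ).val) ≠ 0 := by
    rw [LinearMap.det_toLin']; exact (L⁻¹).det_ne_zero
  have hc : (c : ℂ) * c = |(L : Matrix (Fin m) (Fin m) ℝ).det| := by
    rw [← Complex.ofReal_mul, Real.mul_self_sqrt (abs_nonneg _)]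
  have hc0 : (c : ℂ) ≠ 0 := by
    simpa [c] using L.det_ne_zero
  simp_rw [mul_assoc, integral_const_mul, hg, integral_comp_linearMap_comp_sub volume hdet,
    LinearMap.det_toLin']
  rw [Matrix.coe_units_inv, det_nonsing_inv, Ring.inverse_eq_inv', inv_inv, Complex.real_smul,
    ← hc]
  field_simp

/-- The ridgelet transform `R_ρ[f](a,b) = ∫ f(x) conj(ρ(a·x−b)) dx` intertwines the
    regular representations `π(g)f(x) = |det L|^{-1/2} f(L⁻¹(x−t))` and
    `π̂(g)γ(a,b) = |det L|^{1/2} γ(Lᵀa, b − a·t)` of the affine group: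
    `R_ρ[π(g)f] = π̂(g)[R_ρ f]`. -/
theorem ridgelet_intertwines_affine {m : ℕ} (ρ : ℝ → ℂ) (f : (Fin m → ℝ) → ℂ)
    (L : GL (Fin m) ℝ) (t : Fin m → ℝ)
    (hf : ∀ (a : Fin m → ℝ) (b : ℝ),
      Integrable (fun x : Fin m → ℝ => f x * (starRingEnd ℂ) (ρ (a ⬝ᵥ x - b))))
    (hf' : ∀ (a : Fin m → ℝ) (b : ℝ),
      Integrable (fun x : Fin m → ℝ =>
        f (((L⁻¹ : GL (Fin m) ℝ) : Matrix (Fin m) (Fin m) ℝ) *ᵥ (x - t)) *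
          (starRingEnd ℂ) (ρ (a ⬝ᵥ x - b))))
    (a : Fin m → ℝ) (b : ℝ) :
    ∫ x : Fin m → ℝ,
        ((Real.sqrt |(L : Matrix (Fin m) (Fin m) ℝ).det| : ℂ))⁻¹ *
          f (((L⁻¹ : GL (Fin m) ℝ) : Matrix (Fin m) (Fin m) ℝ) *ᵥ (x - t)) *
          (starRingEnd ℂ) (ρ (a ⬝ᵥ x - b))
      = (Real.sqrt |(L : Matrix (Fin m) (Fin m) ℝ).det| : ℂ) *
          ∫ x : Fin m → ℝ,
            f x * (starRingEnd ℂ)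
              (ρ (((L : Matrix (Fin m) (Fin m) ℝ)ᵀ *ᵥ a) ⬝ᵥ x - (b - a ⬝ᵥ t))) :=
  ridgelet_intertwines_affine_general ρ f L t a b
end

section
/- Define the integral representation network S_σ[γ](x) = ∫_{ℝᵐ×ℝ} γ(a,b) σ(a·x−b) da db and the representations π(g)[f](x) = |det L|^{-1/2} f(L⁻¹(x−t)), π̂(g)[γ](a,b) = |det L|^{1/2} γ(Lᵀa, b − a·t) for g = (L,t) ∈ Aff(m). Then S_σ ∘ π̂(g) = π(g) ∘ S_σ for all g ∈ Aff(m), for all γ for which the integrals converge. -/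
/-!
In the new parameters `(a', b') = (Lᵀa, b − a·t)` the phase `a·x − b` becomes
`a'·L⁻¹(x − t) − b'`. The substitution is the linear map `Lᵀ` on `a` followed by a shear in `b`,
which preserves Lebesgue measure, so its Jacobian is `|det L|`; the factor `|det L|^{1/2}` on the
left then turns into `|det L|^{-1/2}`.
-/

open Matrix MeasureTheory

section SkewProd

variable {E F G : Type*} [NormedAddCommGroup E] [NormedSpace ℝ E] [FiniteDimensional ℝ E]
  [MeasurableSpace E] [BorelSpace E] [NormedAddCommGroup F] [NormedSpace ℝ F]
  [FiniteDimensional ℝ F] [MeasurableSpace F] [BorelSpace F]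
  [NormedAddCommGroup G] [NormedSpace ℝ G]
  (μ : Measure E) [μ.IsAddHaarMeasure] (ν : Measure F) [SFinite ν] [ν.IsAddRightInvariant]

theorem ContinuousLinearEquiv.measurePreserving_skewProd (e : E ≃L[ℝ] E) (g : E →L[ℝ] F) :
    MeasurePreserving (e.skewProd (.refl ℝ F) g) (μ.prod ν)
      (ENNReal.ofReal |(LinearMap.det (e : E →ₗ[ℝ] E))⁻¹| • μ.prod ν) := by
  rw [← Measure.prod_smul_left]
  refine MeasurePreserving.skew_product (g := fun a b => b + g a) ?_ (by fun_prop) ?_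
  · exact ⟨e.continuous.measurable, Measure.map_linearMap_addHaar_eq_smul_addHaar μ
      (LinearEquiv.isUnit_det' e.toLinearEquiv).ne_zero⟩
  · exact .of_forall fun a => map_add_right_eq_self ν (g a)

theorem ContinuousLinearEquiv.integral_comp_skewProd (e : E ≃L[ℝ] E) (g : E →L[ℝ] F)
    (f : E × F → G) :
    ∫ p, f (e.skewProd (.refl ℝ F) g p) ∂(μ.prod ν) =
      |(LinearMap.det (e : E →ₗ[ℝ] E))|⁻¹ • ∫ p, f p ∂(μ.prod ν) := by
  rw [(e.measurePreserving_skewProd μ ν g).integral_comp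
    (e.skewProd _ g).toHomeomorph.measurableEmbedding, integral_smul_measure,
    ENNReal.toReal_ofReal (abs_nonneg _), abs_inv]

end SkewProd

noncomputable section DualAffine

variable {ι : Type*} [Fintype ι] [DecidableEq ι]

def dualAffineEquiv (L : GL ι ℝ) (t : ι → ℝ) : ((ι → ℝ) × ℝ) ≃L[ℝ] (ι → ℝ) × ℝ :=
  (toLinearEquiv' (L : Matrix ι ι ℝ)ᵀ inferInstance).toContinuousLinearEquiv.skewProd
    (.refl ℝ ℝ) (-LinearMap.toContinuousLinearMap (dotProductBilin ℝ ℝ t))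

@[simp]
theorem dualAffineEquiv_apply (L : GL ι ℝ) (t : ι → ℝ) (p : (ι → ℝ) × ℝ) :
    dualAffineEquiv L t p = ((L : Matrix ι ι ℝ)ᵀ *ᵥ p.1, p.2 - p.1 ⬝ᵥ t) := by
  refine Prod.ext rfl ?_
  simp [dualAffineEquiv, dotProduct_comm t, sub_eq_add_neg]

theorem integral_comp_dualAffine {G : Type*} [NormedAddCommGroup G] [NormedSpace ℝ G]
    (L : GL ι ℝ) (t : ι → ℝ) (f : (ι → ℝ) × ℝ → G) :
    ∫ p : (ι → ℝ) × ℝ, f ((L : Matrix ι ι ℝ)ᵀ *ᵥ p.1, p.2 - p.1 ⬝ᵥ t) =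
      |(L : Matrix ι ι ℝ).det|⁻¹ • ∫ p, f p := by
  simp_rw [Measure.volume_eq_prod, ← dualAffineEquiv_apply]
  rw [dualAffineEquiv, ContinuousLinearEquiv.integral_comp_skewProd]
  simp [toLinearEquiv'_apply, LinearMap.det_toLin']

theorem transpose_mulVec_dotProduct_inv_mulVec (L : GL ι ℝ) (a v : ι → ℝ) :
    ((L : Matrix ι ι ℝ)ᵀ *ᵥ a) ⬝ᵥ (((L⁻¹ : GL ι ℝ) : Matrix ι ι ℝ) *ᵥ v) = a ⬝ᵥ v := by
  rw [mulVec_transpose, ← dotProduct_mulVec, mulVec_mulVec, ← Units.val_mul, mul_inv_cancel,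
    Units.val_one, one_mulVec]

end DualAffine

theorem network_intertwines_affine_general {m : ℕ} (σ : ℝ → ℂ)
    (γ : ((Fin m → ℝ) × ℝ) → ℂ) (L : GL (Fin m) ℝ) (t : Fin m → ℝ)
    (x : Fin m → ℝ) :
    ∫ p : (Fin m → ℝ) × ℝ,
        (Real.sqrt |(L : Matrix (Fin m) (Fin m) ℝ).det| : ℂ) *
          γ ((L : Matrix (Fin m) (Fin m) ℝ)ᵀ *ᵥ p.1, p.2 - p.1 ⬝ᵥ t) *
          σ (p.1 ⬝ᵥ x - p.2)
      = ((Real.sqrt |(L : Matrix (Fin m) (Fin m) ℝ).det| : ℂ))⁻¹ *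
          ∫ p : (Fin m → ℝ) × ℝ,
            γ p * σ (p.1 ⬝ᵥ
              (((L⁻¹ : GL (Fin m) ℝ) : Matrix (Fin m) (Fin m) ℝ) *ᵥ (x - t)) - p.2) := by
  set d := |(L : Matrix (Fin m) (Fin m) ℝ).det|
  set y := ((L⁻¹ : GL (Fin m) ℝ) : Matrix (Fin m) (Fin m) ℝ) *ᵥ (x - t)
  have hphase (p : (Fin m → ℝ) × ℝ) :
      ((L : Matrix (Fin m) (Fin m) ℝ)ᵀ *ᵥ p.1) ⬝ᵥ y - (p.2 - p.1 ⬝ᵥ t) = p.1 ⬝ᵥ x - p.2 := by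
    rw [transpose_mulVec_dotProduct_inv_mulVec, dotProduct_sub]
    ring
  calc _ = (Real.sqrt d : ℂ) * ∫ p : (Fin m → ℝ) × ℝ,
        γ ((L : Matrix (Fin m) (Fin m) ℝ)ᵀ *ᵥ p.1, p.2 - p.1 ⬝ᵥ t) *
          σ (((L : Matrix (Fin m) (Fin m) ℝ)ᵀ *ᵥ p.1) ⬝ᵥ y - (p.2 - p.1 ⬝ᵥ t)) := by
        simp only [hphase, mul_assoc, integral_const_mul]
    _ = (Real.sqrt d : ℂ) * ((d⁻¹ : ℝ) • ∫ p : (Fin m → ℝ) × ℝ, γ p * σ (p.1 ⬝ᵥ y - p.2)) := by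
        rw [integral_comp_dualAffine L t fun p => γ p * σ (p.1 ⬝ᵥ y - p.2)]
    _ = _ := by
        rw [Complex.real_smul, ← mul_assoc, ← Complex.ofReal_mul, ← div_eq_mul_inv,
          Real.sqrt_div_self, Complex.ofReal_inv]

/-- The network operator `S_σ[γ](x) = ∫ γ(a,b) σ(a·x−b) da db` intertwines
    `π̂(g)γ(a,b) = |det L|^{1/2} γ(Lᵀa, b − a·t)` and
    `π(g)f(x) = |det L|^{-1/2} f(L⁻¹(x−t))`: `S_σ[π̂(g)γ] = π(g)[S_σ γ]`. -/
theorem network_intertwines_affine {m : ℕ} (σ : ℝ → ℂ)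
    (γ : ((Fin m → ℝ) × ℝ) → ℂ) (L : GL (Fin m) ℝ) (t : Fin m → ℝ)
    (hγ : ∀ x : Fin m → ℝ,
      Integrable (fun p : (Fin m → ℝ) × ℝ => γ p * σ (p.1 ⬝ᵥ x - p.2)))
    (hγ' : ∀ x : Fin m → ℝ,
      Integrable (fun p : (Fin m → ℝ) × ℝ =>
        γ ((L : Matrix (Fin m) (Fin m) ℝ)ᵀ *ᵥ p.1, p.2 - p.1 ⬝ᵥ t) *
          σ (p.1 ⬝ᵥ x - p.2)))
    (x : Fin m → ℝ) :
    ∫ p : (Fin m → ℝ) × ℝ,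
        (Real.sqrt |(L : Matrix (Fin m) (Fin m) ℝ).det| : ℂ) *
          γ ((L : Matrix (Fin m) (Fin m) ℝ)ᵀ *ᵥ p.1, p.2 - p.1 ⬝ᵥ t) *
          σ (p.1 ⬝ᵥ x - p.2)
      = ((Real.sqrt |(L : Matrix (Fin m) (Fin m) ℝ).det| : ℂ))⁻¹ *
          ∫ p : (Fin m → ℝ) × ℝ,
            γ p * σ (p.1 ⬝ᵥ
              (((L⁻¹ : GL (Fin m) ℝ) : Matrix (Fin m) (Fin m) ℝ) *ᵥ (x - t)) - p.2) :=
  network_intertwines_affine_general σ γ L t x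
end
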